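/- Let r ≤ r̃ and let A₁, A₂ be real r̃×r̃ matrices with rank(A₁) = rank(A₂) = r, and let Â₁, Â₂ be real r̃×r̃ matrices with ‖Âᵢ − Aᵢ‖_F ≤ ε for i = 1,2. For i = 1,2 let Pᵢ be a best rank-r approximation of Âᵢ in spectral norm with rank(Pᵢ) = r. Let B, B̂ be real r̃×r̃ matrices with ‖B̂ − B‖_F ≤ ε and ‖B‖_F ≤ c_p. Suppose ‖Aᵢ†‖₂ ≤ c_{A†} and ‖Pᵢ†‖₂ ≤ c_{Â†} for i = 1,2. Then ‖P₁† B̂ (P₂†)ᵀ − A₁† B (A₂†)ᵀ‖_F ≤ (c_{Â†}² + 6 c_{A†} c_{Â†}² c_p + 6 c_{A†}² c_{Â†} c_p) · ε. Moreover, ‖A₁† B (A₂†)ᵀ‖_F ≤ c_{A†}² c_p. -/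

import Mathlib

open Matrix MeasureTheory ProbabilityTheory

noncomputable def specNorm {m n : ℕ} (A : Matrix (Fin m) (Fin n) ℝ) : ℝ :=
  ‖LinearMap.toContinuousLinearMap (Matrix.toEuclideanLin A)‖

noncomputable def frobNorm {m n : ℕ} (A : Matrix (Fin m) (Fin n) ℝ) : ℝ :=
  Real.sqrt (∑ i, ∑ j, (A i j) ^ 2)

/-- The column space (range) of a real matrix. -/
def colSpace {m n : ℕ} (A : Matrix (Fin m) (Fin n) ℝ) : Submodule ℝ (Fin m → ℝ) :=
  LinearMap.range A.mulVecLin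

/-- `G` is the Moore-Penrose pseudoinverse of `A`. -/
def IsMPInv {m n : ℕ} (A : Matrix (Fin m) (Fin n) ℝ) (G : Matrix (Fin n) (Fin m) ℝ) : Prop :=
  A * G * A = A ∧ G * A * G = G ∧ (A * G)ᵀ = A * G ∧ (G * A)ᵀ = G * A

/-!
Wedin's splitting `P† - A† = -P†(P - A)A† + P†(1 - AA†) - (1 - P†P)A†` bounds the first term by
`‖P†‖‖P - A‖‖A†‖`. For the other two one inserts `P† = P†PP†` and `A† = A†AA†` and uses that two
orthogonal projections `E, F` of equal rank satisfy `‖E(1 - F)‖ = ‖(1 - E)F‖`; since `PP†, AA†`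
(and `P†P, A†A`) have rank `r`, this gives `‖P† - A†‖ ≤ 3‖A†‖‖P†‖‖P - A‖`. A best rank-`r`
approximation `Pᵢ` of `Âᵢ` is within `2ε` of `Aᵢ` in spectral norm, and the final estimate follows
from `‖XBYᵀ‖_F ≤ ‖X‖₂‖B‖_F‖Y‖₂` applied to the three terms of
`P₁†B̂P₂†ᵀ - A₁†BA₂†ᵀ = P₁†(B̂ - B)P₂†ᵀ + (P₁† - A₁†)BP₂†ᵀ + A₁†B(P₂† - A₂†)ᵀ`.
-/

open Module

namespace Submodule

variable {𝕜 E : Type*} [RCLike 𝕜] [NormedAddCommGroup E] [InnerProductSpace 𝕜 E]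

lemma norm_sq_eq_norm_starProjection_sq_add (K : Submodule 𝕜 E) [K.HasOrthogonalProjection]
    (x : E) : ‖x‖ ^ 2 = ‖K.starProjection x‖ ^ 2 + ‖Kᗮ.starProjection x‖ ^ 2 :=
  norm_sq_eq_add_norm_sq_projection x K

lemma norm_orthogonal_starProjection_comp_le_iff (K L : Submodule 𝕜 E)
    [K.HasOrthogonalProjection] [L.HasOrthogonalProjection] {s : ℝ} (hs : 0 ≤ s) :
    ‖Kᗮ.starProjection ∘L L.starProjection‖ ≤ s ↔ ∀ w ∈ L, ‖Kᗮ.starProjection w‖ ≤ s * ‖w‖ := by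
  constructor
  · intro h w hw
    calc ‖Kᗮ.starProjection w‖ = ‖(Kᗮ.starProjection ∘L L.starProjection) w‖ := by
          rw [ContinuousLinearMap.comp_apply, starProjection_eq_self_iff.mpr hw]
      _ ≤ s * ‖w‖ := (ContinuousLinearMap.le_opNorm _ _).trans (by gcongr)
  · intro h
    refine ContinuousLinearMap.opNorm_le_bound _ hs fun x => ?_
    calc _ ≤ s * ‖L.starProjection x‖ := h _ (L.starProjection_apply_mem x)
      _ ≤ s * ‖x‖ := by gcongr; exact L.norm_starProjection_apply_le x

lemma exists_mem_starProjection_eq_of_finrank_eq [FiniteDimensional 𝕜 E] {K L : Submodule 𝕜 E}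
    (hKL : finrank 𝕜 K = finrank 𝕜 L) (hinj : ∀ w ∈ L, K.starProjection w = 0 → w = 0) :
    ∀ v ∈ K, ∃ w ∈ L, K.starProjection w = v := by
  let f : L →ₗ[𝕜] K := K.orthogonalProjectionOnto.toLinearMap ∘ₗ L.subtype
  have hf_apply (w : L) : ((f w : K) : E) = K.starProjection w := rfl
  have hf : Function.Injective f := (injective_iff_map_eq_zero f).mpr fun w hw =>
    Subtype.ext (hinj w w.2 (by rw [← hf_apply, hw, ZeroMemClass.coe_zero]))
  intro v hv
  obtain ⟨w, hw⟩ := (LinearMap.injective_iff_surjective_of_finrank_eq_finrank hKL.symm).mp hf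
    ⟨v, hv⟩
  exact ⟨w, w.2, by rw [← hf_apply, hw]⟩

lemma mul_norm_sq_le_norm_starProjection_sq_symm [FiniteDimensional 𝕜 E] {K L : Submodule 𝕜 E}
    (hKL : finrank 𝕜 K = finrank 𝕜 L) {t : ℝ} (ht : 0 < t)
    (h : ∀ w ∈ L, t * ‖w‖ ^ 2 ≤ ‖K.starProjection w‖ ^ 2) :
    ∀ v ∈ K, t * ‖v‖ ^ 2 ≤ ‖L.starProjection v‖ ^ 2 := by
  have hsurj := exists_mem_starProjection_eq_of_finrank_eq hKL fun w hw hw0 => by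
    by_contra hne
    have := h w hw
    rw [hw0, norm_zero] at this
    nlinarith [mul_pos ht (pow_pos (norm_pos_iff.mpr hne) 2)]
  intro v hv
  obtain ⟨w, hwL, rfl⟩ := hsurj v hv
  have key : ‖K.starProjection w‖ ^ 2 ≤ ‖w‖ * ‖L.starProjection (K.starProjection w)‖ := by
    calc ‖K.starProjection w‖ ^ 2
        = RCLike.re (inner 𝕜 (K.starProjection w) (K.starProjection w)) :=
          (inner_self_eq_norm_sq _).symm
      _ = RCLike.re (inner 𝕜 w (K.starProjection w)) := by
          rw [inner_starProjection_left_eq_right, starProjection_eq_self_iff.mpr hv]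
      _ = RCLike.re (inner 𝕜 w (L.starProjection (K.starProjection w))) := by
          rw [← L.inner_starProjection_left_eq_right, starProjection_eq_self_iff.mpr hwL]
      _ ≤ ‖w‖ * ‖L.starProjection (K.starProjection w)‖ := re_inner_le_norm _ _
  have hw := h w hwL
  set a := ‖K.starProjection w‖
  set p := ‖L.starProjection (K.starProjection w)‖
  have ha0 : 0 ≤ a := norm_nonneg _
  clear_value a p
  rcases ha0.eq_or_lt with ha | ha
  · rw [← ha, zero_pow two_ne_zero, mul_zero]; positivity
  have : t * a ^ 2 * a ^ 2 ≤ p ^ 2 * a ^ 2 :=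
    calc t * a ^ 2 * a ^ 2 = t * (a ^ 2) ^ 2 := by ring
      _ ≤ t * (‖w‖ * p) ^ 2 := by gcongr
      _ = (t * ‖w‖ ^ 2) * p ^ 2 := by ring
      _ ≤ a ^ 2 * p ^ 2 := by gcongr
      _ = p ^ 2 * a ^ 2 := by ring
  exact le_of_mul_le_mul_right this (by positivity)

theorem norm_orthogonal_starProjection_comp_le [FiniteDimensional 𝕜 E] {K L : Submodule 𝕜 E}
    (hKL : finrank 𝕜 K = finrank 𝕜 L) :
    ‖Lᗮ.starProjection ∘L K.starProjection‖ ≤ ‖Kᗮ.starProjection ∘L L.starProjection‖ := by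
  set s := ‖Kᗮ.starProjection ∘L L.starProjection‖
  rcases le_or_gt 1 s with hs | hs
  · calc _ ≤ ‖Lᗮ.starProjection‖ * ‖K.starProjection‖ := ContinuousLinearMap.opNorm_comp_le _ _
      _ ≤ 1 * 1 := by gcongr <;> exact starProjection_norm_le _
      _ ≤ s := by rw [one_mul]; exact hs
  have hs0 : 0 ≤ s := norm_nonneg _
  have hL : ∀ w ∈ L, (1 - s ^ 2) * ‖w‖ ^ 2 ≤ ‖K.starProjection w‖ ^ 2 := by
    intro w hw
    have hgap := (norm_orthogonal_starProjection_comp_le_iff K L hs0).mp le_rfl w hw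
    have := K.norm_sq_eq_norm_starProjection_sq_add w
    nlinarith [norm_nonneg (Kᗮ.starProjection w), norm_nonneg w]
  have hK := mul_norm_sq_le_norm_starProjection_sq_symm hKL (by nlinarith) hL
  refine (norm_orthogonal_starProjection_comp_le_iff L K hs0).mpr fun v hv => ?_
  have := L.norm_sq_eq_norm_starProjection_sq_add v
  have := hK v hv
  refine (pow_le_pow_iff_left₀ (norm_nonneg _) (by positivity) two_ne_zero).mp ?_
  nlinarith

lemma norm_starProjection_comp_comm [CompleteSpace E] (U V : Submodule 𝕜 E)
    [U.HasOrthogonalProjection] [V.HasOrthogonalProjection] :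
    ‖U.starProjection ∘L V.starProjection‖ = ‖V.starProjection ∘L U.starProjection‖ := by
  rw [← ContinuousLinearMap.adjoint.norm_map, ContinuousLinearMap.adjoint_comp,
    (isSelfAdjoint_starProjection U).adjoint_eq, (isSelfAdjoint_starProjection V).adjoint_eq]

theorem norm_starProjection_comp_orthogonal_eq [FiniteDimensional 𝕜 E] {K L : Submodule 𝕜 E}
    (hKL : finrank 𝕜 K = finrank 𝕜 L) :
    ‖K.starProjection ∘L Lᗮ.starProjection‖ = ‖Kᗮ.starProjection ∘L L.starProjection‖ := by
  have := FiniteDimensional.complete 𝕜 E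
  rw [norm_starProjection_comp_comm K Lᗮ]
  refine le_antisymm (norm_orthogonal_starProjection_comp_le hKL) ?_
  exact norm_orthogonal_starProjection_comp_le hKL.symm

end Submodule

namespace Matrix

open scoped Matrix.Norms.L2Operator

variable {𝕜 n : Type*} [RCLike 𝕜] [Fintype n] [DecidableEq n]

lemma rank_eq_finrank_range_toEuclideanCLM (P : Matrix n n 𝕜) :
    P.rank = finrank 𝕜 (toEuclideanCLM (n := n) (𝕜 := 𝕜) P).range := by
  rw [rank_eq_finrank_range_toLin P (PiLp.basisFun 2 𝕜 n) (PiLp.basisFun 2 𝕜 n)]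
  rfl

lemma isStarProjection_toEuclideanCLM {P : Matrix n n 𝕜} (hP : IsStarProjection P) :
    IsStarProjection (toEuclideanCLM (n := n) (𝕜 := 𝕜) P) :=
  ⟨hP.isIdempotentElem.map _, hP.isSelfAdjoint.map _⟩

theorem l2_opNorm_mul_one_sub_eq_of_rank_eq {P Q : Matrix n n 𝕜} (hP : IsStarProjection P)
    (hQ : IsStarProjection Q) (hPQ : P.rank = Q.rank) :
    ‖P * (1 - Q)‖ = ‖(1 - P) * Q‖ := by
  rw [← l2_opNorm_toEuclideanCLM, ← l2_opNorm_toEuclideanCLM, map_mul, map_mul, map_sub,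
    map_sub, map_one]
  set K := (toEuclideanCLM (n := n) (𝕜 := 𝕜) P).range
  set L := (toEuclideanCLM (n := n) (𝕜 := 𝕜) Q).range
  obtain ⟨_, hK⟩ :=
    isStarProjection_iff_eq_starProjection_range.mp
      (isStarProjection_toEuclideanCLM hP)
  obtain ⟨_, hL⟩ :=
    isStarProjection_iff_eq_starProjection_range.mp
      (isStarProjection_toEuclideanCLM hQ)
  rw [hK, hL, ← Submodule.starProjection_orthogonal', ← Submodule.starProjection_orthogonal']
  refine Submodule.norm_starProjection_comp_orthogonal_eq ?_
  rw [← rank_eq_finrank_range_toEuclideanCLM, ← rank_eq_finrank_range_toEuclideanCLM, hPQ]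

end Matrix

section FrobeniusNorm

variable {k l m n : ℕ}

lemma specNorm_transpose (A : Matrix (Fin m) (Fin n) ℝ) : specNorm Aᵀ = specNorm A := by
  open scoped Matrix.Norms.L2Operator in
  rw [← conjTranspose_eq_transpose_of_trivial]; exact l2_opNorm_conjTranspose A

lemma specNorm_nonneg (A : Matrix (Fin m) (Fin n) ℝ) : 0 ≤ specNorm A := norm_nonneg _

lemma frobNorm_nonneg (A : Matrix (Fin m) (Fin n) ℝ) : 0 ≤ frobNorm A := Real.sqrt_nonneg _

lemma frobNorm_sq_eq_sum_col (A : Matrix (Fin m) (Fin n) ℝ) :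
    frobNorm A ^ 2 = ∑ j, ‖WithLp.toLp 2 (fun i => A i j)‖ ^ 2 := by
  rw [frobNorm, Real.sq_sqrt (by positivity), Finset.sum_comm]
  simp [EuclideanSpace.norm_sq_eq]

lemma frobNorm_mul_le_specNorm_mul (A : Matrix (Fin m) (Fin n) ℝ) (B : Matrix (Fin n) (Fin k) ℝ) :
    frobNorm (A * B) ≤ specNorm A * frobNorm B := by
  refine (pow_le_pow_iff_left₀ (frobNorm_nonneg _)
    (mul_nonneg (specNorm_nonneg A) (frobNorm_nonneg B)) two_ne_zero).mp ?_
  rw [mul_pow, frobNorm_sq_eq_sum_col, frobNorm_sq_eq_sum_col, Finset.mul_sum]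
  gcongr with j
  rw [← mul_pow]
  gcongr
  exact ContinuousLinearMap.le_opNorm
    (LinearMap.toContinuousLinearMap (toEuclideanLin A)) (WithLp.toLp 2 fun l => B l j)

lemma frobNorm_transpose (A : Matrix (Fin m) (Fin n) ℝ) : frobNorm Aᵀ = frobNorm A := by
  rw [frobNorm, frobNorm, Finset.sum_comm]; rfl

lemma frobNorm_mul_le_mul_specNorm (A : Matrix (Fin m) (Fin n) ℝ) (B : Matrix (Fin n) (Fin k) ℝ) :
    frobNorm (A * B) ≤ frobNorm A * specNorm B := by
  rw [← frobNorm_transpose, transpose_mul, mul_comm, ← specNorm_transpose, ← frobNorm_transpose A]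
  exact frobNorm_mul_le_specNorm_mul _ _

section

attribute [local instance] Matrix.frobeniusNormedAddCommGroup

lemma frobNorm_eq_frobenius_norm (A : Matrix (Fin m) (Fin n) ℝ) : frobNorm A = ‖A‖ := by
  rw [frobNorm, frobenius_norm_def, ← Real.sqrt_eq_rpow]
  simp_rw [Real.rpow_two, Real.norm_eq_abs, sq_abs]

lemma frobNorm_add_le (A B : Matrix (Fin m) (Fin n) ℝ) :
    frobNorm (A + B) ≤ frobNorm A + frobNorm B := by
  simp only [frobNorm_eq_frobenius_norm]; exact norm_add_le A B

lemma specNorm_le_frobNorm (A : Matrix (Fin m) (Fin n) ℝ) : specNorm A ≤ frobNorm A := by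
  refine ContinuousLinearMap.opNorm_le_bound _ (frobNorm_nonneg A) fun x => ?_
  calc _ = ‖replicateCol Unit (A *ᵥ WithLp.ofLp x)‖ := (frobenius_norm_replicateCol _).symm
    _ = ‖A * replicateCol Unit (WithLp.ofLp x)‖ := by rw [replicateCol_mulVec]
    _ ≤ ‖A‖ * ‖replicateCol Unit (WithLp.ofLp x)‖ := frobenius_norm_mul _ _
    _ = frobNorm A * ‖x‖ := by rw [frobenius_norm_replicateCol, frobNorm_eq_frobenius_norm]

end

lemma frobNorm_mul_mul_transpose_le (X : Matrix (Fin k) (Fin m) ℝ) (B : Matrix (Fin m) (Fin n) ℝ)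
    (Y : Matrix (Fin l) (Fin n) ℝ) :
    frobNorm (X * B * Yᵀ) ≤ specNorm X * frobNorm B * specNorm Y := by
  grw [frobNorm_mul_le_mul_specNorm, frobNorm_mul_le_specNorm_mul, specNorm_transpose]
  · exact specNorm_nonneg _

lemma frobNorm_mul_mul_transpose_sub_le (X X' : Matrix (Fin k) (Fin m) ℝ)
    (B B' : Matrix (Fin m) (Fin n) ℝ) (Y Y' : Matrix (Fin l) (Fin n) ℝ) :
    frobNorm (X' * B' * Y'ᵀ - X * B * Yᵀ) ≤
      specNorm X' * frobNorm (B' - B) * specNorm Y' + specNorm (X' - X) * frobNorm B * specNorm Y'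
        + specNorm X * frobNorm B * specNorm (Y' - Y) := by
  have hsplit : X' * B' * Y'ᵀ - X * B * Yᵀ =
      X' * (B' - B) * Y'ᵀ + (X' - X) * B * Y'ᵀ + X * B * (Y' - Y)ᵀ := by
    simp only [transpose_sub, Matrix.mul_sub, Matrix.sub_mul]
    abel
  rw [hsplit]
  grw [frobNorm_add_le, frobNorm_add_le, frobNorm_mul_mul_transpose_le,
    frobNorm_mul_mul_transpose_le, frobNorm_mul_mul_transpose_le]

lemma specNorm_sub_le_two_mul_frobNorm_of_best_approx {r : ℕ} {X A P : Matrix (Fin m) (Fin n) ℝ}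
    (hA : A.rank ≤ r) (hP : ∀ M : Matrix (Fin m) (Fin n) ℝ, M.rank ≤ r →
      specNorm (X - P) ≤ specNorm (X - M)) :
    specNorm (P - A) ≤ 2 * frobNorm (X - A) := by
  open scoped Matrix.Norms.L2Operator in
  have hXP : ‖X - P‖ ≤ ‖X - A‖ := hP A hA
  calc ‖P - A‖ ≤ ‖X - P‖ + ‖X - A‖ := by
        rw [norm_sub_rev X P]; exact norm_sub_le_norm_sub_add_norm_sub P X A
    _ ≤ 2 * ‖X - A‖ := by linarith
    _ ≤ 2 * frobNorm (X - A) := by gcongr; exact specNorm_le_frobNorm _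

end FrobeniusNorm

namespace IsMPInv

open scoped Matrix.Norms.L2Operator

variable {m n : ℕ} {A B : Matrix (Fin m) (Fin n) ℝ} {G H : Matrix (Fin n) (Fin m) ℝ}

lemma isStarProjection_mul (hG : IsMPInv A G) : IsStarProjection (A * G) where
  isIdempotentElem := by rw [IsIdempotentElem, ← Matrix.mul_assoc, hG.1]
  isSelfAdjoint := by
    rw [IsSelfAdjoint, Matrix.star_eq_conjTranspose, conjTranspose_eq_transpose_of_trivial,
      hG.2.2.1]

lemma isStarProjection_mul' (hG : IsMPInv A G) : IsStarProjection (G * A) where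
  isIdempotentElem := by rw [IsIdempotentElem, ← Matrix.mul_assoc, hG.2.1]
  isSelfAdjoint := by
    rw [IsSelfAdjoint, Matrix.star_eq_conjTranspose, conjTranspose_eq_transpose_of_trivial,
      hG.2.2.2]

lemma rank_mul (hG : IsMPInv A G) : (A * G).rank = A.rank :=
  le_antisymm (A.rank_mul_le_left G) <| by
    calc A.rank = (A * G * A).rank := by rw [hG.1]
      _ ≤ (A * G).rank := rank_mul_le_left _ _

lemma rank_mul' (hG : IsMPInv A G) : (G * A).rank = A.rank :=
  le_antisymm (G.rank_mul_le_right A) <| by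
    calc A.rank = (A * (G * A)).rank := by rw [← Matrix.mul_assoc, hG.1]
      _ ≤ (G * A).rank := rank_mul_le_right _ _

lemma one_sub_mul_mul_self (hG : IsMPInv A G) : (1 - A * G) * A = 0 := by
  rw [Matrix.sub_mul, Matrix.one_mul, hG.1, sub_self]

lemma mul_one_sub_mul (hG : IsMPInv A G) : A * (1 - G * A) = 0 := by
  rw [Matrix.mul_sub, Matrix.mul_one, ← Matrix.mul_assoc, hG.1, sub_self]

theorem l2_opNorm_mul_one_sub_mul_le (hG : IsMPInv A G) (hH : IsMPInv B H)
    (hAB : A.rank = B.rank) : ‖H * (1 - A * G)‖ ≤ ‖G‖ * ‖H‖ * ‖B - A‖ := by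
  have hproj : ‖B * H * (1 - A * G)‖ = ‖(1 - B * H) * (A * G)‖ :=
    Matrix.l2_opNorm_mul_one_sub_eq_of_rank_eq hH.isStarProjection_mul hG.isStarProjection_mul
      (by rw [hH.rank_mul, hG.rank_mul, hAB])
  have hAG : (1 - B * H) * (A * G) = (1 - B * H) * (A - B) * G := by
    rw [Matrix.mul_sub, hH.one_sub_mul_mul_self, sub_zero, Matrix.mul_assoc]
  calc ‖H * (1 - A * G)‖ = ‖H * (B * H * (1 - A * G))‖ := by
        rw [← Matrix.mul_assoc, ← Matrix.mul_assoc, hH.2.1]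
    _ ≤ ‖H‖ * ‖(1 - B * H) * (A - B) * G‖ := by
        rw [← hAG, ← hproj]; exact Matrix.l2_opNorm_mul _ _
    _ ≤ ‖H‖ * (‖1 - B * H‖ * ‖A - B‖ * ‖G‖) := by
        gcongr
        exact (Matrix.l2_opNorm_mul _ _).trans
          (by gcongr; exact Matrix.l2_opNorm_mul _ _)
    _ ≤ ‖H‖ * (1 * ‖B - A‖ * ‖G‖) := by
        rw [norm_sub_rev A B]
        gcongr
        exact hH.isStarProjection_mul.one_sub.norm_le
    _ = ‖G‖ * ‖H‖ * ‖B - A‖ := by ring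

theorem l2_opNorm_one_sub_mul_mul_le (hG : IsMPInv A G) (hH : IsMPInv B H)
    (hAB : A.rank = B.rank) : ‖(1 - H * B) * G‖ ≤ ‖G‖ * ‖H‖ * ‖B - A‖ := by
  have hproj : ‖H * B * (1 - G * A)‖ = ‖(1 - H * B) * (G * A)‖ :=
    Matrix.l2_opNorm_mul_one_sub_eq_of_rank_eq hH.isStarProjection_mul' hG.isStarProjection_mul'
      (by rw [hH.rank_mul', hG.rank_mul', hAB])
  have hGA : H * B * (1 - G * A) = H * (B - A) * (1 - G * A) := by
    rw [Matrix.mul_assoc, Matrix.mul_assoc, Matrix.sub_mul, hG.mul_one_sub_mul, sub_zero]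
  calc ‖(1 - H * B) * G‖ = ‖(1 - H * B) * (G * A) * G‖ := by
        rw [Matrix.mul_assoc, hG.2.1]
    _ ≤ ‖H * (B - A) * (1 - G * A)‖ * ‖G‖ := by
        rw [← hGA, hproj]; exact Matrix.l2_opNorm_mul _ _
    _ ≤ ‖H‖ * ‖B - A‖ * ‖1 - G * A‖ * ‖G‖ := by
        gcongr
        exact (Matrix.l2_opNorm_mul _ _).trans
          (by gcongr; exact Matrix.l2_opNorm_mul _ _)
    _ ≤ ‖H‖ * ‖B - A‖ * 1 * ‖G‖ := by
        gcongr
        exact hG.isStarProjection_mul'.one_sub.norm_le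
    _ = ‖G‖ * ‖H‖ * ‖B - A‖ := by ring

theorem l2_opNorm_sub_le (hG : IsMPInv A G) (hH : IsMPInv B H) (hAB : A.rank = B.rank) :
    ‖H - G‖ ≤ 3 * (‖G‖ * ‖H‖ * ‖B - A‖) := by
  have hsplit : H - G = -(H * (B - A) * G) + H * (1 - A * G) - (1 - H * B) * G := by
    simp only [Matrix.mul_sub, Matrix.sub_mul, Matrix.mul_one, Matrix.one_mul, Matrix.mul_assoc]
    abel
  have hfirst : ‖H * (B - A) * G‖ ≤ ‖G‖ * ‖H‖ * ‖B - A‖ :=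
    calc ‖H * (B - A) * G‖ ≤ ‖H‖ * ‖B - A‖ * ‖G‖ :=
          (Matrix.l2_opNorm_mul _ _).trans (by gcongr; exact Matrix.l2_opNorm_mul _ _)
      _ = ‖G‖ * ‖H‖ * ‖B - A‖ := by ring
  calc ‖H - G‖ ≤ ‖H * (B - A) * G‖ + ‖H * (1 - A * G)‖ + ‖(1 - H * B) * G‖ := by
        rw [hsplit, ← norm_neg (H * (B - A) * G)]
        exact (norm_sub_le _ _).trans (by gcongr; exact norm_add_le _ _)
    _ ≤ 3 * (‖G‖ * ‖H‖ * ‖B - A‖) := by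
        linarith [hG.l2_opNorm_mul_one_sub_mul_le hH hAB, hG.l2_opNorm_one_sub_mul_mul_le hH hAB]

theorem specNorm_sub_le_of_best_approx {r : ℕ} {X A P : Matrix (Fin m) (Fin n) ℝ}
    {Ad Pd : Matrix (Fin n) (Fin m) ℝ} (hA : A.rank = r) (hP : P.rank = r)
    (hbest : ∀ M : Matrix (Fin m) (Fin n) ℝ, M.rank ≤ r → specNorm (X - P) ≤ specNorm (X - M))
    (hAd : IsMPInv A Ad) (hPd : IsMPInv P Pd) :
    specNorm (Pd - Ad) ≤ 6 * (specNorm Ad * specNorm Pd * frobNorm (X - A)) :=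
  calc specNorm (Pd - Ad) ≤ 3 * (specNorm Ad * specNorm Pd * specNorm (P - A)) :=
        hAd.l2_opNorm_sub_le hPd (hA.trans hP.symm)
    _ ≤ 3 * (specNorm Ad * specNorm Pd * (2 * frobNorm (X - A))) := by
        gcongr
        · exact mul_nonneg (specNorm_nonneg _) (specNorm_nonneg _)
        · exact specNorm_sub_le_two_mul_frobNorm_of_best_approx hA.le hbest
    _ = 6 * (specNorm Ad * specNorm Pd * frobNorm (X - A)) := by ring

end IsMPInv

theorem stmt9_general {r rt : ℕ} (ε cp cA cP : ℝ)
    (A₁ A₂ Ah₁ Ah₂ P₁ P₂ B Bh : Matrix (Fin rt) (Fin rt) ℝ)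
    (hrA₁ : A₁.rank = r) (hrA₂ : A₂.rank = r)
    (hA1e : frobNorm (Ah₁ - A₁) ≤ ε) (hA2e : frobNorm (Ah₂ - A₂) ≤ ε)
    (hP₁r : P₁.rank = r) (hP₂r : P₂.rank = r)
    (hP₁best : ∀ M : Matrix (Fin rt) (Fin rt) ℝ, M.rank ≤ r →
      specNorm (Ah₁ - P₁) ≤ specNorm (Ah₁ - M))
    (hP₂best : ∀ M : Matrix (Fin rt) (Fin rt) ℝ, M.rank ≤ r →
      specNorm (Ah₂ - P₂) ≤ specNorm (Ah₂ - M))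
    (hBe : frobNorm (Bh - B) ≤ ε) (hBn : frobNorm B ≤ cp)
    (A₁d A₂d P₁d P₂d : Matrix (Fin rt) (Fin rt) ℝ)
    (hA₁d : IsMPInv A₁ A₁d) (hA₂d : IsMPInv A₂ A₂d)
    (hP₁d : IsMPInv P₁ P₁d) (hP₂d : IsMPInv P₂ P₂d)
    (hcA1 : specNorm A₁d ≤ cA) (hcA2 : specNorm A₂d ≤ cA)
    (hcP1 : specNorm P₁d ≤ cP) (hcP2 : specNorm P₂d ≤ cP) :
    frobNorm (P₁d * Bh * P₂dᵀ - A₁d * B * A₂dᵀ) ≤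
      (cP ^ 2 + 6 * cA * cP ^ 2 * cp + 6 * cA ^ 2 * cP * cp) * ε ∧
    frobNorm (A₁d * B * A₂dᵀ) ≤ cA ^ 2 * cp := by
  have hε : 0 ≤ ε := (frobNorm_nonneg _).trans hA1e
  have hcp : 0 ≤ cp := (frobNorm_nonneg _).trans hBn
  have hcA : 0 ≤ cA := (specNorm_nonneg _).trans hcA1
  have hcP : 0 ≤ cP := (specNorm_nonneg _).trans hcP1
  have h₁ : specNorm (P₁d - A₁d) ≤ 6 * (cA * cP * ε) :=
    (hA₁d.specNorm_sub_le_of_best_approx hrA₁ hP₁r hP₁best hP₁d).trans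
      (by gcongr <;> first | exact specNorm_nonneg _ | exact frobNorm_nonneg _)
  have h₂ : specNorm (P₂d - A₂d) ≤ 6 * (cA * cP * ε) :=
    (hA₂d.specNorm_sub_le_of_best_approx hrA₂ hP₂r hP₂best hP₂d).trans
      (by gcongr <;> first | exact specNorm_nonneg _ | exact frobNorm_nonneg _)
  constructor
  · calc _ ≤ _ := frobNorm_mul_mul_transpose_sub_le A₁d P₁d B Bh A₂d P₂d
      _ ≤ cP * ε * cP + 6 * (cA * cP * ε) * cp * cP + cA * cp * (6 * (cA * cP * ε)) := by
          gcongr <;> first | exact specNorm_nonneg _ | exact frobNorm_nonneg _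
      _ = _ := by ring
  · calc _ ≤ _ := frobNorm_mul_mul_transpose_le A₁d B A₂d
      _ ≤ cA * cp * cA := by gcongr <;> first | exact specNorm_nonneg _ | exact frobNorm_nonneg _
      _ = _ := by ring

theorem stmt9 {r rt : ℕ} (hr : r ≤ rt) (ε cp cA cP : ℝ)
    (A₁ A₂ Ah₁ Ah₂ P₁ P₂ B Bh : Matrix (Fin rt) (Fin rt) ℝ)
    (hrA₁ : A₁.rank = r) (hrA₂ : A₂.rank = r)
    (hA1e : frobNorm (Ah₁ - A₁) ≤ ε) (hA2e : frobNorm (Ah₂ - A₂) ≤ ε)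
    (hP₁r : P₁.rank = r) (hP₂r : P₂.rank = r)
    (hP₁best : ∀ M : Matrix (Fin rt) (Fin rt) ℝ, M.rank ≤ r →
      specNorm (Ah₁ - P₁) ≤ specNorm (Ah₁ - M))
    (hP₂best : ∀ M : Matrix (Fin rt) (Fin rt) ℝ, M.rank ≤ r →
      specNorm (Ah₂ - P₂) ≤ specNorm (Ah₂ - M))
    (hBe : frobNorm (Bh - B) ≤ ε) (hBn : frobNorm B ≤ cp)
    (A₁d A₂d P₁d P₂d : Matrix (Fin rt) (Fin rt) ℝ)
    (hA₁d : IsMPInv A₁ A₁d) (hA₂d : IsMPInv A₂ A₂d)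
    (hP₁d : IsMPInv P₁ P₁d) (hP₂d : IsMPInv P₂ P₂d)
    (hcA1 : specNorm A₁d ≤ cA) (hcA2 : specNorm A₂d ≤ cA)
    (hcP1 : specNorm P₁d ≤ cP) (hcP2 : specNorm P₂d ≤ cP) :
    frobNorm (P₁d * Bh * P₂dᵀ - A₁d * B * A₂dᵀ) ≤
      (cP ^ 2 + 6 * cA * cP ^ 2 * cp + 6 * cA ^ 2 * cP * cp) * ε ∧
    frobNorm (A₁d * B * A₂dᵀ) ≤ cA ^ 2 * cp :=
  stmt9_general ε cp cA cP A₁ A₂ Ah₁ Ah₂ P₁ P₂ B Bh hrA₁ hrA₂ hA1e hA2e hP₁r hP₂r hP₁best hP₂best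
    hBe hBn A₁d A₂d P₁d P₂d hA₁d hA₂d hP₁d hP₂d hcA1 hcA2 hcP1 hcP2
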